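/- arXiv:2504.14195 — 2 statements merged into one kernel-verified Lean document; each statement's English description precedes it below -/
import Mathlib

section
/- For every preference profile P and every tiebreaker τ for P, every River winner is a Split Cycle winner, i.e., RV(P,τ) ⊆ SC(P). -/
/-! ## Preference profiles -/

/-- A preference profile: a finite set of voters, a finite set of alternatives,
and for each voter a (Boolean-valued) preference relation, `pref i x y` meaning
voter `i` ranks `x` above `y`. -/
structure Profile (ν α : Type) where
  voters : Finset ν
  alts : Finset α
  pref : ν → α → α → Bool

namespace Profile

variable {ν α : Type}

/-- A profile is valid if there is at least one voter, at least two alternatives,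
and every voter's preference is a strict linear order on the alternatives. -/
def Valid (P : Profile ν α) : Prop :=
  P.voters.Nonempty ∧ 2 ≤ P.alts.card ∧
  (∀ i ∈ P.voters, ∀ a ∈ P.alts, ¬ P.pref i a a) ∧
  (∀ i ∈ P.voters, ∀ a ∈ P.alts, ∀ b ∈ P.alts, ∀ c ∈ P.alts,
      P.pref i a b → P.pref i b c → P.pref i a c) ∧
  (∀ i ∈ P.voters, ∀ a ∈ P.alts, ∀ b ∈ P.alts, a ≠ b → (P.pref i a b ↔ ¬ P.pref i b a))

/-- The majority margin of `x` over `y`. -/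
def margin (P : Profile ν α) (x y : α) : ℤ :=
  ((P.voters.filter (fun i => P.pref i x y)).card : ℤ) -
    ((P.voters.filter (fun i => P.pref i y x)).card : ℤ)

/-- The restriction of a profile to the alternatives other than `x`. -/
def restrict [DecidableEq α] (P : Profile ν α) (x : α) : Profile ν α :=
  ⟨P.voters, P.alts.erase x, P.pref⟩

/-- `y` Pareto-dominates `x`: every voter ranks `y` above `x`,
i.e. the margin of `y` over `x` equals the number of voters. -/
def ParetoDominates (P : Profile ν α) (y x : α) : Prop :=
  P.margin y x = P.voters.card

/-- A profile is uniquely weighted if no margin between distinct alternatives is zero and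
distinct ordered pairs of distinct alternatives have distinct margins. -/
def UniquelyWeighted (P : Profile ν α) : Prop :=
  (∀ x ∈ P.alts, ∀ y ∈ P.alts, x ≠ y → P.margin x y ≠ 0) ∧
  (∀ x ∈ P.alts, ∀ y ∈ P.alts, ∀ v ∈ P.alts, ∀ w ∈ P.alts,
      x ≠ y → v ≠ w → (x, y) ≠ (v, w) → P.margin x y ≠ P.margin v w)

end Profile

/-! ## Lists, precedence, tiebreakers -/

/-- `e` precedes `f` in the list `L`. -/
def Precedes {β : Type} (L : List β) (e f : β) : Prop :=
  ∃ l₁ l₂ l₃ : List β, L = l₁ ++ e :: (l₂ ++ f :: l₃)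

/-- A tiebreaker for a profile `P`: a linear order (list) of all ordered pairs of distinct
alternatives with nonnegative margin, in which pairs with strictly larger margin come first. -/
def IsTiebreaker {ν α : Type} (P : Profile ν α) (L : List (α × α)) : Prop :=
  L.Nodup ∧
  (∀ e : α × α, e ∈ L ↔ e.1 ∈ P.alts ∧ e.2 ∈ P.alts ∧ e.1 ≠ e.2 ∧ 0 ≤ P.margin e.1 e.2) ∧
  L.Pairwise (fun e f => P.margin f.1 f.2 ≤ P.margin e.1 e.2)

/-! ## The River method -/

open Classical in
/-- The River diagram: process the edges in the order given by `L`, adding an edge unless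
it would create a directed cycle or a second incoming edge at its target. -/
noncomputable def riverDiagram {α : Type} (L : List (α × α)) : Finset (α × α) :=
  L.foldl (fun E e =>
    if (∃ f ∈ E, f.2 = e.2) ∨ Relation.ReflTransGen (fun a b => (a, b) ∈ E) e.2 e.1
    then E else insert e E) ∅

open Classical in
/-- The River winners: the sources (vertices with no incoming edge) of the River diagram. -/
noncomputable def riverWinners {ν α : Type} (P : Profile ν α) (L : List (α × α)) : Finset α :=
  P.alts.filter (fun x => ∀ f ∈ riverDiagram L, f.2 ≠ x)

/-! ## Split Cycle -/

/-- The (cyclically) consecutive edges of a cycle given by a list of distinct vertices. -/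
def cycleEdges {α : Type} (c : List α) : List (α × α) := c.zip (c.rotate 1)

/-- A majority cycle: a cycle of distinct alternatives all of whose edges have positive margin. -/
def IsMajorityCycle {ν α : Type} (P : Profile ν α) (c : List α) : Prop :=
  c.Nodup ∧ (∀ a ∈ c, a ∈ P.alts) ∧ ∀ e ∈ cycleEdges c, 0 < P.margin e.1 e.2

/-- `e` is a splitting edge of some majority cycle: it attains the minimum margin on the cycle. -/
def IsSplittingEdge {ν α : Type} (P : Profile ν α) (e : α × α) : Prop :=
  ∃ c : List α, IsMajorityCycle P c ∧ e ∈ cycleEdges c ∧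
    ∀ f ∈ cycleEdges c, P.margin e.1 e.2 ≤ P.margin f.1 f.2

open Classical in
/-- The Split Cycle winners: alternatives with no incoming edge in the Split Cycle diagram,
whose edges are the positive-margin pairs that are not splitting edges of any majority cycle. -/
noncomputable def splitCycleWinners {ν α : Type} (P : Profile ν α) : Finset α :=
  P.alts.filter (fun x => ¬ ∃ y ∈ P.alts, 0 < P.margin y x ∧ ¬ IsSplittingEdge P (y, x))

/-! ## Ranked Pairs -/

/-- A processing order for Ranked Pairs: all pairs with positive margin,
ordered by decreasing margin. -/
def IsRPOrder {ν α : Type} (P : Profile ν α) (L : List (α × α)) : Prop :=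
  L.Nodup ∧
  (∀ e : α × α, e ∈ L ↔ e.1 ∈ P.alts ∧ e.2 ∈ P.alts ∧ 0 < P.margin e.1 e.2) ∧
  L.Pairwise (fun e f => P.margin f.1 f.2 ≤ P.margin e.1 e.2)

open Classical in
/-- The Ranked Pairs diagram: add each edge in order unless it would create a directed cycle. -/
noncomputable def rpDiagram {α : Type} (L : List (α × α)) : Finset (α × α) :=
  L.foldl (fun E e =>
    if Relation.ReflTransGen (fun a b => (a, b) ∈ E) e.2 e.1 then E else insert e E) ∅

open Classical in
/-- The Ranked Pairs winners: sources of the Ranked Pairs diagram. -/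
noncomputable def rpWinners {ν α : Type} (P : Profile ν α) (L : List (α × α)) : Finset α :=
  P.alts.filter (fun x => ∀ f ∈ rpDiagram L, f.2 ≠ x)

/-! ## Beat Path -/

/-- A majority path: a sequence of distinct alternatives with positive margins along it. -/
def IsMajorityPath {ν α : Type} (P : Profile ν α) (p : List α) : Prop :=
  p.Nodup ∧ (∀ a ∈ p, a ∈ P.alts) ∧ p.Chain' (fun a b => 0 < P.margin a b)

/-- `s_P(x,y)`: the maximum strength (minimum margin along the path) of a majority path
from `x` to `y`, and `0` if there is no such path. -/
noncomputable def beatPathStrength {ν α : Type} (P : Profile ν α) (x y : α) : ℤ :=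
  sSup ({0} ∪ {s : ℤ | ∃ p : List α, IsMajorityPath P p ∧ p.head? = some x ∧
    p.getLast? = some y ∧ ((p.zip p.tail).map (fun e => P.margin e.1 e.2)).min? = some s})

open Classical in
/-- The Beat Path winners. -/
noncomputable def beatPathWinners {ν α : Type} (P : Profile ν α) : Finset α :=
  P.alts.filter (fun x => ∀ y ∈ P.alts, y ≠ x →
    beatPathStrength P y x ≤ beatPathStrength P x y)

/-! ## Stable Voting -/

/-- Auxiliary, fuel-based definition of Stable Voting (for uniquely weighted profiles).
If only one alternative remains it wins; otherwise the winner is the alternative `x` of the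
first pair `(x,y)` (ordered by decreasing margin) with `m(x,y) > 0` and `x` a Split Cycle
winner, such that `x` is a Stable Voting winner of the profile without `y`. -/
noncomputable def svAux {ν α : Type} [DecidableEq α] : ℕ → Profile ν α → Set α
  | 0, P => ↑P.alts
  | (n+1), P =>
      if P.alts.card ≤ 1 then ↑P.alts
      else {x | x ∈ P.alts ∧ ∃ y ∈ P.alts, 0 < P.margin x y ∧ x ∈ splitCycleWinners P ∧
        x ∈ svAux n (P.restrict y) ∧
        ∀ x' ∈ P.alts, ∀ y' ∈ P.alts, 0 < P.margin x' y' → x' ∈ splitCycleWinners P →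
          P.margin x y < P.margin x' y' → x' ∉ svAux n (P.restrict y')}

/-- The Stable Voting winners (for uniquely weighted profiles). -/
noncomputable def svWinners {ν α : Type} [DecidableEq α] (P : Profile ν α) : Set α :=
  svAux P.alts.card P

/-! ## Smith set, covering, quasi-Pareto domination -/

/-- A dominant set of alternatives: nonempty, and each member defeats every non-member. -/
def IsDominant {ν α : Type} (P : Profile ν α) (X : Finset α) : Prop :=
  X.Nonempty ∧ X ⊆ P.alts ∧ ∀ x ∈ X, ∀ y ∈ P.alts, y ∉ X → 0 < P.margin x y

/-- The Smith set: the inclusion-minimal dominant set. -/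
def IsSmithSet {ν α : Type} (P : Profile ν α) (S : Finset α) : Prop :=
  IsDominant P S ∧ ∀ X : Finset α, IsDominant P X → S ⊆ X

/-- `y` covers `x`: `y` defeats `x` and does at least as well against every third alternative. -/
def Covers {ν α : Type} (P : Profile ν α) (y x : α) : Prop :=
  0 < P.margin y x ∧ ∀ z ∈ P.alts, z ≠ x → z ≠ y → P.margin x z ≤ P.margin y z

/-- `y` quasi-Pareto-dominates `x`. -/
def QuasiParetoDominates {ν α : Type} (P : Profile ν α) (y x : α) : Prop :=
  Covers P y x ∧ ∀ z ∈ P.alts, z ≠ x → z ≠ y →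
    P.margin z x ≤ P.margin y x ∧ P.margin x z ≤ P.margin y x

/-! ## Tiebreaker functions -/

/-- A consistent tiebreaker function: it assigns a tiebreaker to every profile, and the relative
order of two edges not involving `x` is unchanged when `x` is removed from the profile. -/
def IsConsistentTBF {ν α : Type} [DecidableEq α] (T : Profile ν α → List (α × α)) : Prop :=
  (∀ P : Profile ν α, IsTiebreaker P (T P)) ∧
  ∀ (P : Profile ν α) (x a b c d : α), x ∈ P.alts →
    x ≠ a → x ≠ b → x ≠ c → x ≠ d →
    (a, b) ∈ T P → (c, d) ∈ T P →
    (Precedes (T P) (a, b) (c, d) ↔ Precedes (T (P.restrict x)) (a, b) (c, d))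

/-- A Pareto-consistent tiebreaker function: consistent, and whenever `y` Pareto-dominates `x`,
the edge `(y,z)` precedes the edge `(x,z)` for every third alternative `z`. -/
def IsParetoConsistentTBF {ν α : Type} [DecidableEq α]
    (T : Profile ν α → List (α × α)) : Prop :=
  IsConsistentTBF T ∧
  ∀ (P : Profile ν α) (x y z : α), P.ParetoDominates y x →
    z ≠ x → z ≠ y → (y, z) ∈ T P → (x, z) ∈ T P → Precedes (T P) (y, z) (x, z)

/-- A quasi-Pareto-consistent tiebreaker function. -/
def IsQuasiParetoConsistentTBF {ν α : Type} [DecidableEq α]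
    (T : Profile ν α → List (α × α)) : Prop :=
  IsParetoConsistentTBF T ∧
  (∀ (P : Profile ν α) (x y y' : α),
      P.margin y x = P.margin y' x → QuasiParetoDominates P y x →
      ¬ QuasiParetoDominates P y' x →
      (y, x) ∈ T P → (y', x) ∈ T P → Precedes (T P) (y, x) (y', x)) ∧
  (∀ (P : Profile ν α) (x y z : α), QuasiParetoDominates P y x →
      ((x, z) ∈ T P → (y, z) ∈ T P → Precedes (T P) (y, z) (x, z)) ∧
      ((x, z) ∈ T P → (y, x) ∈ T P → Precedes (T P) (y, x) (x, z)))

/-- A tiebreaker for `P` induced by the fixed tie-breaking order `r` on pairs: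
edges are ordered by decreasing margin, ties in margin broken according to `r`. -/
def IsTiebreakerVia {ν α : Type} (r : α × α → α × α → Prop) (P : Profile ν α)
    (L : List (α × α)) : Prop :=
  IsTiebreaker P L ∧ ∀ e f : α × α, Precedes L e f →
    P.margin f.1 f.2 < P.margin e.1 e.2 ∨ (P.margin e.1 e.2 = P.margin f.1 f.2 ∧ r e f)

/-! Let `x` be a River winner and suppose `m(y, x) > 0`. The pair `(y, x)` occurs in the
tiebreaker, and when it was processed it was rejected; since `x` never receives an edge, the
reason must be that the diagram built so far already contained a path from `x` to `y`. Every
edge of that path was processed earlier, so has margin at least `m(y, x)`; after shortening it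
to a simple path, closing it up with `(y, x)` gives a majority cycle on which `(y, x)` has the
minimum margin. Thus `(y, x)` is a splitting edge, and `x` is undefeated in Split Cycle. -/

theorem Profile.margin_self {ν α : Type} (P : Profile ν α) (x : α) : P.margin x x = 0 := by
  simp [Profile.margin]

namespace List

variable {α : Type} {R : α → α → Prop}

theorem IsChain.rel_of_mem_zip_tail {l : List α} (h : l.IsChain R) :
    ∀ e ∈ l.zip l.tail, R e.1 e.2 := by
  induction h with
  | nil => simp
  | singleton => simp
  | cons_cons hab _ ih =>
    intro e he
    rcases mem_cons.1 he with rfl | he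
    · exact hab
    · exact ih e he

theorem exists_nodup_isChain_cons_of_relationReflTransGen {a b : α}
    (h : Relation.ReflTransGen R a b) :
    ∃ t : List α, (a :: t).IsChain R ∧ (a :: t).getLast (cons_ne_nil a t) = b ∧
      (a :: t).Nodup := by
  induction h using Relation.ReflTransGen.head_induction_on with
  | refl => exact ⟨[], .singleton b, rfl, nodup_singleton b⟩
  | @head a c hac _ ih =>
    obtain ⟨t, hchain, hlast, hnodup⟩ := ih
    by_cases ha : a ∈ c :: t
    · -- if the path from `c` already visits `a`, restart it there
      obtain ⟨l₁, l₂, hsplit⟩ := append_of_mem ha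
      simp only [hsplit, getLast_append_of_ne_nil _ (cons_ne_nil a l₂)] at hchain hlast hnodup
      exact ⟨l₂, hchain.suffix (suffix_append l₁ _), hlast,
        hnodup.sublist (sublist_append_right l₁ _)⟩
    · exact ⟨c :: t, hchain.cons_cons hac, by rwa [getLast_cons_cons], nodup_cons.2 ⟨ha, hnodup⟩⟩

theorem zip_cons_append_singleton (x z : α) (t : List α) :
    (x :: t).zip (t ++ [z]) = (x :: t).zip t ++ [((x :: t).getLast (cons_ne_nil x t), z)] := by
  induction t generalizing x with
  | nil => rfl
  | cons c t ih => simp [ih]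

end List

section Cycles

variable {α : Type}

theorem cycleEdges_cons (x : α) (t : List α) :
    cycleEdges (x :: t) = (x :: t).zip t ++ [((x :: t).getLast (List.cons_ne_nil x t), x)] := by
  simp [cycleEdges, List.zip_cons_append_singleton]

theorem exists_mem_cycleEdges_fst_eq {c : List α} {a : α} (ha : a ∈ c) :
    ∃ e ∈ cycleEdges c, e.1 = a := by
  rw [← List.map_fst_zip (by simp : c.length ≤ (c.rotate 1).length)] at ha
  simpa [cycleEdges] using ha

theorem isSplittingEdge_of_reflTransGen {ν : Type} {P : Profile ν α} {R : α → α → Prop}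
    {x y : α} (hR : ∀ a b, R a b → a ∈ P.alts ∧ P.margin y x ≤ P.margin a b)
    (hxy : Relation.ReflTransGen R x y) (hy : y ∈ P.alts) (hyx : 0 < P.margin y x) :
    IsSplittingEdge P (y, x) := by
  obtain ⟨t, hchain, hlast, hnodup⟩ := List.exists_nodup_isChain_cons_of_relationReflTransGen hxy
  have hedges : ∀ e ∈ cycleEdges (x :: t), R e.1 e.2 ∨ e = (y, x) := by
    intro e he
    rw [cycleEdges_cons, hlast, List.mem_append, List.mem_singleton] at he
    exact he.imp_left (hchain.rel_of_mem_zip_tail e)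
  have hmin : ∀ e ∈ cycleEdges (x :: t), P.margin y x ≤ P.margin e.1 e.2 := by
    intro e he
    rcases hedges e he with h | rfl
    · exact (hR _ _ h).2
    · exact le_rfl
  refine ⟨x :: t, ⟨hnodup, fun a ha => ?_, fun e he => hyx.trans_le (hmin e he)⟩, ?_, hmin⟩
  · obtain ⟨e, he, rfl⟩ := exists_mem_cycleEdges_fst_eq ha
    rcases hedges e he with h | rfl
    · exact (hR _ _ h).1
    · exact hy
  · simp [cycleEdges_cons, hlast]

end Cycles

section Tiebreaker

variable {ν α : Type} {P : Profile ν α}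

theorem IsTiebreaker.fst_mem {L : List (α × α)} (hL : IsTiebreaker P L) {e : α × α}
    (he : e ∈ L) : e.1 ∈ P.alts :=
  ((hL.2.1 e).1 he).1

theorem IsTiebreaker.margin_le_of_mem_left {l₁ l₂ : List (α × α)} {e f : α × α}
    (hL : IsTiebreaker P (l₁ ++ e :: l₂)) (hf : f ∈ l₁) :
    P.margin e.1 e.2 ≤ P.margin f.1 f.2 :=
  (List.pairwise_append.1 hL.2.2).2.2 f hf e List.mem_cons_self

end Tiebreaker

section Fold

variable {β γ : Type}

theorem subset_foldl_of_forall_subset {f : Finset β → γ → Finset β} (hf : ∀ E e, E ⊆ f E e)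
    (l : List γ) (E : Finset β) : E ⊆ l.foldl f E := by
  induction l generalizing E with
  | nil => exact Finset.Subset.refl E
  | cons e l ih => exact (hf E e).trans (ih _)

theorem mem_or_mem_of_mem_foldl {f : Finset β → β → Finset β}
    (hf : ∀ E e, ∀ x ∈ f E e, x ∈ E ∨ x = e) {l : List β} {E : Finset β} {x : β}
    (hx : x ∈ l.foldl f E) : x ∈ E ∨ x ∈ l := by
  induction l generalizing E with
  | nil => exact Or.inl hx
  | cons e l ih =>
    rcases ih hx with h | h
    · exact (hf E e x h).imp_right fun hxe : x = e => hxe ▸ List.mem_cons_self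
    · exact Or.inr (List.mem_cons_of_mem e h)

end Fold

section River

open Classical

variable {α : Type}

noncomputable def riverStep (E : Finset (α × α)) (e : α × α) : Finset (α × α) :=
  if (∃ f ∈ E, f.2 = e.2) ∨ Relation.ReflTransGen (fun a b => (a, b) ∈ E) e.2 e.1
  then E else insert e E

theorem riverDiagram_eq_foldl (L : List (α × α)) : riverDiagram L = L.foldl riverStep ∅ := rfl

theorem subset_riverStep (E : Finset (α × α)) (e : α × α) : E ⊆ riverStep E e := by
  unfold riverStep
  split
  · exact Finset.Subset.refl E
  · exact Finset.subset_insert e E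

theorem mem_or_eq_of_mem_riverStep {E : Finset (α × α)} {e f : α × α}
    (hf : f ∈ riverStep E e) : f ∈ E ∨ f = e := by
  unfold riverStep at hf
  split at hf
  · exact Or.inl hf
  · exact (Finset.mem_insert.1 hf).symm

theorem mem_of_mem_riverDiagram {L : List (α × α)} {f : α × α} (hf : f ∈ riverDiagram L) :
    f ∈ L :=
  (mem_or_mem_of_mem_foldl (fun _ _ _ => mem_or_eq_of_mem_riverStep) hf).resolve_left
    (Finset.notMem_empty f)

theorem reflTransGen_riverDiagram_of_forall_snd_ne {l₁ l₂ : List (α × α)} {x y : α}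
    (hx : ∀ f ∈ riverDiagram (l₁ ++ (y, x) :: l₂), f.2 ≠ x) :
    Relation.ReflTransGen (fun a b => (a, b) ∈ riverDiagram l₁) x y := by
  set E := riverDiagram l₁
  have hstep : riverStep E (y, x) ⊆ riverDiagram (l₁ ++ (y, x) :: l₂) := by
    rw [riverDiagram_eq_foldl, List.foldl_append, List.foldl_cons]
    exact subset_foldl_of_forall_subset subset_riverStep l₂ _
  by_contra hpath
  have hkept : ¬((∃ f ∈ E, f.2 = x) ∨ Relation.ReflTransGen (fun a b => (a, b) ∈ E) x y) := by
    rintro (⟨f, hf, rfl⟩ | h)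
    · exact hx f (hstep (subset_riverStep E _ hf)) rfl
    · exact hpath h
  have hinsert : riverStep E (y, x) = insert (y, x) E := if_neg hkept
  exact hx (y, x) (hstep (hinsert ▸ Finset.mem_insert_self _ _)) rfl

end River

theorem river_subset_splitCycle_general {ν α : Type} (P : Profile ν α)
    (L : List (α × α)) (hL : IsTiebreaker P L) :
    riverWinners P L ⊆ splitCycleWinners P := by
  intro x hx
  simp only [riverWinners, splitCycleWinners, Finset.mem_filter] at hx ⊢
  obtain ⟨hxA, hsource⟩ := hx
  refine ⟨hxA, ?_⟩
  rintro ⟨y, hyA, hyx, hnotSplitting⟩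
  have hne : y ≠ x := by
    rintro rfl
    exact hyx.ne' (P.margin_self y)
  obtain ⟨l₁, l₂, rfl⟩ := List.append_of_mem ((hL.2.1 (y, x)).2 ⟨hyA, hxA, hne, hyx.le⟩)
  refine hnotSplitting (isSplittingEdge_of_reflTransGen (fun a b hab => ?_)
    (reflTransGen_riverDiagram_of_forall_snd_ne hsource) hyA hyx)
  have hab₁ := mem_of_mem_riverDiagram hab
  exact ⟨hL.fst_mem (List.mem_append_left _ hab₁), hL.margin_le_of_mem_left hab₁⟩

theorem river_subset_splitCycle {ν α : Type} (P : Profile ν α) (hP : P.Valid)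
    (L : List (α × α)) (hL : IsTiebreaker P L) :
    riverWinners P L ⊆ splitCycleWinners P :=
  river_subset_splitCycle_general P L hL
end

section
/- Split Cycle violates independence of Pareto-dominated alternatives, even on uniquely weighted profiles: there exists a uniquely weighted preference profile P and alternatives a, b ∈ A(P) such that b Pareto-dominates a and SC(P) ≠ SC(P_{−a}). -/
/-! ## STATEMENT 3: Split Cycle violates IPDA, even on uniquely weighted profiles -/


/-!
Take 33 voters and alternatives `0, …, 4`, where `1` Pareto-dominates `0`. The margins are

```
      0    1    2    3    4
0     .  -33  -11    5   -9
1    33    .   -1   13   15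
2    11    1    .   -3    7
3    -5  -13    3    .   17
4     9  -15   -7  -17    .
```

The only majority defeat of `2` is `3 → 2`, of margin `3`, and it is the weakest edge of the cycle
`3 → 2 → 4 → 0 → 3`, so `2` is a Split Cycle winner. Once `0` is removed, a cycle through
`3 → 2` must continue from `2` either to `1`, along the weaker edge `2 → 1`, or to `4`, which beats
only `0`. So `3 → 2` splits no cycle of the restricted profile and `2` stops winning.
-/

theorem mem_splitCycleWinners_iff {ν α : Type} (P : Profile ν α) (x : α) :
    x ∈ splitCycleWinners P ↔
      x ∈ P.alts ∧ ∀ y ∈ P.alts, 0 < P.margin y x → IsSplittingEdge P (y, x) := by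
  simp [splitCycleWinners]

theorem exists_mem_cycleEdges_of_mem {α : Type} {c : List α} {x : α} (hx : x ∈ c) :
    ∃ y ∈ c, (x, y) ∈ cycleEdges c := by
  obtain ⟨i, hi, rfl⟩ := List.getElem_of_mem hx
  have hi' : i < (c.rotate 1).length := by simpa using hi
  refine ⟨(c.rotate 1)[i], List.mem_rotate.1 (List.getElem_mem hi'), ?_⟩
  have hmem := List.getElem_mem (l := cycleEdges c) (n := i) (by simpa [cycleEdges] using hi)
  simpa [cycleEdges, List.getElem_zip] using hmem

/-- Leaving `y`, a cycle through `x → y` either takes an edge weaker than `x → y`, or reaches a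
vertex with no way out. -/
theorem not_isSplittingEdge_of_forall_succ {ν α : Type} {P : Profile ν α} {x y : α}
    (h : ∀ z ∈ P.alts, 0 < P.margin y z →
      P.margin y z < P.margin x y ∨ ∀ w ∈ P.alts, P.margin z w ≤ 0) :
    ¬ IsSplittingEdge P (x, y) := by
  rintro ⟨c, ⟨-, halts, hpos⟩, hxy, hmin⟩
  have hy : y ∈ c := List.mem_rotate.1 (List.of_mem_zip hxy).2
  obtain ⟨z, hz, hyz⟩ := exists_mem_cycleEdges_of_mem hy
  rcases h z (halts z hz) (hpos _ hyz) with hweak | hdead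
  · exact (hmin _ hyz).not_gt hweak
  · obtain ⟨w, hw, hzw⟩ := exists_mem_cycleEdges_of_mem hz
    exact (hpos _ hzw).not_ge (hdead w (halts w hw))

/-- Ballots list the alternatives from best to worst; voter `i` casts `ballots[i]`. -/
def ballots : List (List ℕ) :=
  List.replicate 2 [1, 0, 3, 2, 4] ++ List.replicate 4 [1, 0, 3, 4, 2] ++
  List.replicate 3 [1, 3, 2, 4, 0] ++ [[1, 3, 4, 2, 0], [1, 4, 0, 2, 3], [1, 4, 2, 0, 3]] ++
  List.replicate 6 [2, 1, 0, 3, 4] ++ [[2, 1, 4, 0, 3]] ++ List.replicate 3 [2, 3, 4, 1, 0] ++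
  [[2, 4, 1, 0, 3], [2, 4, 3, 1, 0]] ++ List.replicate 2 [3, 1, 4, 0, 2] ++
  List.replicate 3 [3, 2, 1, 4, 0] ++ [[3, 4, 2, 1, 0]] ++ List.replicate 2 [4, 1, 0, 3, 2] ++
  [[4, 2, 1, 0, 3]]

def ipdaProfile : Profile ℕ ℕ :=
  ⟨Finset.range 33, Finset.range 5,
    fun i x y => decide ((ballots.getD i []).idxOf x < (ballots.getD i []).idxOf y)⟩

theorem two_mem_splitCycleWinners : 2 ∈ splitCycleWinners ipdaProfile := by
  refine (mem_splitCycleWinners_iff _ _).2 ⟨by decide, fun y hy hpos => ?_⟩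
  obtain rfl : y = 3 := by revert y; decide
  exact ⟨[3, 2, 4, 0], ⟨by decide, by decide, by decide⟩, by decide, by decide⟩

theorem two_not_mem_splitCycleWinners_restrict_zero :
    2 ∉ splitCycleWinners (ipdaProfile.restrict 0) := fun h =>
  not_isSplittingEdge_of_forall_succ (by decide)
    (((mem_splitCycleWinners_iff _ _).1 h).2 3 (by decide) (by decide))

theorem splitCycle_violates_IPDA : ∃ (P : Profile ℕ ℕ) (a b : ℕ),
    P.Valid ∧ P.UniquelyWeighted ∧ a ∈ P.alts ∧ b ∈ P.alts ∧
    P.ParetoDominates b a ∧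
    splitCycleWinners P ≠ splitCycleWinners (P.restrict a) := by
  refine ⟨ipdaProfile, 0, 1, by unfold Profile.Valid; decide,
    by unfold Profile.UniquelyWeighted; decide, by decide, by decide,
    by unfold Profile.ParetoDominates; decide, fun h => ?_⟩
  exact two_not_mem_splitCycleWinners_restrict_zero (h ▸ two_mem_splitCycleWinners)
end
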